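/- Let p be prime and a, b, m, n, s ∈ {1,...,p-1} with a ≠ b and m+n+s = p. Then the sum over k from 0 to p-1 of (a+k)^m (b+k)^n k^s is congruent to -(m·a + n·b) mod p. -/

import Mathlib

/-!
The summand is `P(k)` for the monic polynomial `P = (X + a)^m (X + b)^n X^s` of degree `p`.
Over a field with `q > 2` elements, `∑ x^i` for `0 ≤ i ≤ q` vanishes except at `i = q - 1`, where
it is `-1` (note `x^q = x`); hence `∑ P(x) = -(coefficient of X^(p-1))`. That coefficient of a
product of monic polynomials is the sum of theirs, namely `m a + n b`.
-/

open Finset Polynomial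

namespace FiniteField

variable {K : Type*} [Field K] [Fintype K]

theorem sum_pow_card_sub_one : ∑ x : K, x ^ (Fintype.card K - 1) = -1 := by
  classical
  have h : ∀ x : K, x ^ (Fintype.card K - 1) = if x = 0 then 0 else 1 := fun x => by
    split_ifs with hx
    · rw [hx, zero_pow (Nat.sub_ne_zero_of_lt Fintype.one_lt_card)]
    · exact pow_card_sub_one_eq_one x hx
  simp [h, sum_ite, filter_ne', Nat.cast_sub Fintype.card_pos]

theorem sum_pow_of_le_card (hK : 2 < Fintype.card K) {i : ℕ} (hi : i ≤ Fintype.card K) :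
    ∑ x : K, x ^ i = if i = Fintype.card K - 1 then -1 else 0 := by
  rcases lt_trichotomy i (Fintype.card K - 1) with hlt | rfl | hgt
  · rw [if_neg hlt.ne, sum_pow_lt_card_sub_one K i hlt]
  · rw [if_pos rfl, sum_pow_card_sub_one]
  · obtain rfl : i = Fintype.card K := by omega
    rw [if_neg (by omega)]
    simpa only [pow_card, pow_one] using sum_pow_lt_card_sub_one K 1 (by omega)

theorem sum_eval_eq_neg_coeff (hK : 2 < Fintype.card K) {P : K[X]}
    (hP : P.natDegree ≤ Fintype.card K) :
    ∑ x : K, P.eval x = -P.coeff (Fintype.card K - 1) := by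
  simp_rw [eval_eq_sum_range' (Nat.lt_succ_of_le hP)]
  rw [sum_comm]
  simp_rw [← mul_sum]
  rw [sum_congr rfl fun i hi => by rw [sum_pow_of_le_card hK (Nat.lt_succ_iff.mp (mem_range.mp hi))]]
  simp

end FiniteField

theorem ZMod.sum_range_natCast {M : Type*} [AddCommMonoid M] (n : ℕ) [NeZero n]
    (f : ZMod n → M) : ∑ k ∈ range n, f k = ∑ x : ZMod n, f x :=
  sum_nbij' (↑) ZMod.val (fun _ _ => mem_univ _) (fun x _ => mem_range.mpr x.val_lt)
    (fun _ hk => ZMod.val_natCast_of_lt (mem_range.mp hk)) (fun x _ => ZMod.natCast_zmod_val x)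
    (fun _ _ => rfl)

namespace Polynomial

variable {R : Type*} [CommSemiring R]

theorem nextCoeff_X_add_C_pow (a : R) (m : ℕ) : ((X + C a) ^ m).nextCoeff = m * a := by
  rw [(monic_X_add_C a).nextCoeff_pow, nextCoeff_X_add_C, nsmul_eq_mul]

theorem nextCoeff_X_pow (s : ℕ) : (X ^ s : R[X]).nextCoeff = 0 := by
  simpa using nextCoeff_X_add_C_pow (0 : R) s

end Polynomial

theorem triple_product_sum_p_general (p a b m n s : ℕ) (hp : p.Prime)
    (hm : 1 ≤ m ∧ m ≤ p - 1) (hn : 1 ≤ n ∧ n ≤ p - 1) (hs : 1 ≤ s ∧ s ≤ p - 1)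
    (h : m + n + s = p) :
    (∑ k ∈ Finset.range p,
        ((a : ZMod p) + (k : ZMod p)) ^ m * ((b : ZMod p) + (k : ZMod p)) ^ n *
          (k : ZMod p) ^ s) =
      -((m : ZMod p) * (a : ZMod p) + (n : ZMod p) * (b : ZMod p)) := by
  have : Fact p.Prime := ⟨hp⟩
  have hp2 : 2 < p := by omega
  set P : (ZMod p)[X] := (X + C (a : ZMod p)) ^ m * (X + C (b : ZMod p)) ^ n * X ^ s
  have hmonic_a := (monic_X_add_C (a : ZMod p)).pow m
  have hmonic_b := (monic_X_add_C (b : ZMod p)).pow n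
  have hdeg : P.natDegree = p := by
    rw [(hmonic_a.mul hmonic_b).natDegree_mul (monic_X_pow s), hmonic_a.natDegree_mul hmonic_b]
    simp only [natDegree_pow, natDegree_X_add_C, natDegree_X, mul_one]
    omega
  have hnext : P.nextCoeff = m * a + n * b := by
    rw [(hmonic_a.mul hmonic_b).nextCoeff_mul (monic_X_pow s), hmonic_a.nextCoeff_mul hmonic_b,
      nextCoeff_X_add_C_pow, nextCoeff_X_add_C_pow, nextCoeff_X_pow, add_zero]
  calc _ = ∑ x : ZMod p, P.eval x := by
        rw [ZMod.sum_range_natCast p fun x => (a + x) ^ m * (b + x) ^ n * x ^ s]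
        simp [P, add_comm]
    _ = -P.nextCoeff := by
        rw [FiniteField.sum_eval_eq_neg_coeff (by rwa [ZMod.card]) (by rw [ZMod.card, hdeg]), ZMod.card,
          nextCoeff_of_natDegree_pos (by omega), hdeg]
    _ = _ := by rw [hnext]

theorem triple_product_sum_p (p a b m n s : ℕ) (hp : p.Prime)
    (ha : 1 ≤ a ∧ a ≤ p - 1) (hb : 1 ≤ b ∧ b ≤ p - 1) (hab : a ≠ b)
    (hm : 1 ≤ m ∧ m ≤ p - 1) (hn : 1 ≤ n ∧ n ≤ p - 1) (hs : 1 ≤ s ∧ s ≤ p - 1)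
    (h : m + n + s = p) :
    (∑ k ∈ Finset.range p,
        ((a : ZMod p) + (k : ZMod p)) ^ m * ((b : ZMod p) + (k : ZMod p)) ^ n *
          (k : ZMod p) ^ s) =
      -((m : ZMod p) * (a : ZMod p) + (n : ZMod p) * (b : ZMod p)) :=
  triple_product_sum_p_general p a b m n s hp hm hn hs h
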